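/- arXiv:2201.11876 — 6 statements merged into one kernel-verified Lean document; each statement's English description precedes it below -/
import Mathlib

section
/- Let A be a finite partial order with incidence-algebra Möbius function μ, let F be a cofunctor from A to finite-dimensional real normed vector spaces, and let (f_a : F(a) → ℝ)_{a∈A} be differentiable functions. Set c(a) = Σ_{b ≥ a} μ(b,a). Then a point x ∈ lim F is a critical point of the Regionalized loss f_R(x) = Σ_{a∈A} c(a)·f_a(x_a) on lim F — i.e. Σ_{a∈A} c(a)·(Df_a(x_a))(u_a) = 0 for every u ∈ lim F — if and only if the Möbius-inverted differential vanishes on lim F, i.e. for every u ∈ lim F, Σ_{a∈A} Σ_{b ≤ a} μ(a,b)·(Df_b(x_b))(F^a_b(u_a)) = 0. -/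
open Finset IncidenceAlgebra

/-- **Characterization of critical points of the Regionalized loss via the Möbius
inversion.**  `A` is a finite partial order with incidence-algebra Möbius function
`mu ℝ` (the paper's `μ(a,b)` for `b ≤ a` is `mu ℝ b a`), `F` is a cofunctor from `A` to
finite-dimensional real normed vector spaces, the `f a : F a → ℝ` are differentiable and
`c a = Σ_{b ≥ a} μ(b,a)`.  A point `x ∈ lim F` is a critical point of
`f_R = Σ_a c(a)·f_a` on `lim F` iff the Möbius-inverted differential vanishes on `lim F`. -/
theorem criticalPoint_iff_mobius_inverted_differential_vanishes
    {A : Type*} [Fintype A] [PartialOrder A] [DecidableEq A]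
    [LocallyFiniteOrder A] [DecidableRel ((· ≤ ·) : A → A → Prop)]
    (V : A → Type*) [∀ a, NormedAddCommGroup (V a)] [∀ a, NormedSpace ℝ (V a)]
    [∀ a, FiniteDimensional ℝ (V a)]
    (F : ∀ a b : A, b ≤ a → (V a →L[ℝ] V b))
    (hid : ∀ a, F a a le_rfl = ContinuousLinearMap.id ℝ (V a))
    (hcomp : ∀ a b c : A, ∀ (hba : b ≤ a) (hcb : c ≤ b),
      (F b c hcb).comp (F a b hba) = F a c (hcb.trans hba))
    (f : ∀ a, V a → ℝ) (hf : ∀ a, Differentiable ℝ (f a))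
    (x : ∀ a, V a) (hx : ∀ a b : A, ∀ h : b ≤ a, F a b h (x a) = x b) :
    (∀ u : ∀ a, V a, (∀ a b : A, ∀ h : b ≤ a, F a b h (u a) = u b) →
        ∑ a, (∑ b : {b : A // a ≤ b}, mu ℝ a b.1) * fderiv ℝ (f a) (x a) (u a) = 0)
      ↔
    (∀ u : ∀ a, V a, (∀ a b : A, ∀ h : b ≤ a, F a b h (u a) = u b) →
        ∑ a, ∑ b : {b : A // b ≤ a},
          mu ℝ b.1 a * fderiv ℝ (f b.1) (x b.1) (F a b.1 b.2 (u a)) = 0) := by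
  have key : ∀ u : ∀ a, V a, (∀ a b : A, ∀ h : b ≤ a, F a b h (u a) = u b) →
      (∑ a, ∑ b : {b : A // b ≤ a},
          mu ℝ b.1 a * fderiv ℝ (f b.1) (x b.1) (F a b.1 b.2 (u a)))
        = ∑ a, (∑ b : {b : A // a ≤ b}, mu ℝ a b.1) * fderiv ℝ (f a) (x a) (u a) := by
    intro u hu
    have h1 : ∀ a : A, (∑ b : {b : A // b ≤ a},
        mu ℝ b.1 a * fderiv ℝ (f b.1) (x b.1) (F a b.1 b.2 (u a)))
        = ∑ b ∈ univ.filter (fun b => b ≤ a),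
            mu ℝ b a * fderiv ℝ (f b) (x b) (u b) := by
      intro a
      rw [Finset.sum_subtype (p := fun b => b ≤ a) (univ.filter (fun b => b ≤ a)) (by simp)
        (fun b => mu ℝ b a * fderiv ℝ (f b) (x b) (u b))]
      apply Finset.sum_congr rfl
      intro b _
      rw [hu a b.1 b.2]
    have h2 : ∀ a : A, (∑ b : {b : A // a ≤ b}, mu ℝ a b.1)
        = ∑ b ∈ univ.filter (fun b => a ≤ b), mu ℝ a b := by
      intro a
      rw [Finset.sum_subtype (p := fun b => a ≤ b) (univ.filter (fun b => a ≤ b)) (by simp)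
        (fun b => mu ℝ a b)]
    simp only [h1, h2, Finset.sum_filter, Finset.sum_mul]
    rw [Finset.sum_comm]
    apply Finset.sum_congr rfl
    intro b _
    apply Finset.sum_congr rfl
    intro a _
    by_cases h : b ≤ a <;> simp [h]
  constructor
  · intro h u hu
    rw [key u hu]
    exact h u hu
  · intro h u hu
    rw [← key u hu]
    exact h u hu
end

section
/- Let A be a finite partial order and let F be a cofunctor from A to finite-dimensional real normed vector spaces. Define d_F, which sends a family l = (l_{a→b})_{b ≤ a}, with l_{a→b} a continuous linear form on F(b), to the family of linear forms d_F(l)(a) = Σ_{b ≤ a} (l_{a→b} ∘ F^a_b) − Σ_{b ≥ a} l_{b→a} on F(a). Then a family of continuous linear forms λ = (λ_a)_{a∈A}, λ_a on F(a), annihilates lim F (i.e. Σ_{a∈A} λ_a(x_a) = 0 for every x ∈ lim F) if and only if there exists a family l = (l_{a→b})_{b ≤ a} with λ_a = d_F(l)(a) for every a ∈ A. -/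
open Finset

lemma my_sum_subtype_dite {α : Type*} [Fintype α] {M : Type*} [AddCommMonoid M]
    (p : α → Prop) [DecidablePred p] (f : ∀ b, p b → M) :
    ∑ b : {b // p b}, f b.1 b.2 = ∑ b : α, (if h : p b then f b h else 0) := by
  calc ∑ b : {b // p b}, f b.1 b.2
      = ∑ b : {b // p b}, (fun c => if h : p c then f c h else 0) b.1 :=
        Finset.sum_congr rfl fun b _ => (dif_pos b.2).symm
    _ = ∑ b ∈ Finset.univ.filter p, (if h : p b then f b h else 0) :=
        (Finset.sum_subtype (p := p) (Finset.univ.filter p) (fun x => by simp)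
          (fun c => if h : p c then f c h else 0)).symm
    _ = ∑ b : α, (if h : p b then f b h else 0) :=
        Finset.sum_filter_of_ne (fun x _ hx => by by_contra h; simp [dif_neg h] at hx)

/-- **Annihilators of `lim F` are exactly the image of `d_F`.**  `A` is a finite partial
order and `F` a cofunctor from `A` to finite-dimensional real normed vector spaces.  A
family of continuous linear forms `lam = (lam a)_{a ∈ A}` annihilates `lim F` (i.e.
`Σ_a lam a (x a) = 0` for every compatible family `x`) iff there is a family
`l = (l_{a→b})_{b ≤ a}` of continuous linear forms (`l_{a→b}` on `F b`) with
`lam a = d_F(l)(a) = Σ_{b ≤ a} l_{a→b} ∘ F^a_b − Σ_{b ≥ a} l_{b→a}` for all `a`. -/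
theorem annihilates_lim_iff_mem_image_dF
    {A : Type*} [Fintype A] [PartialOrder A] [DecidableEq A]
    [DecidableRel ((· ≤ ·) : A → A → Prop)]
    (V : A → Type*) [∀ a, NormedAddCommGroup (V a)] [∀ a, NormedSpace ℝ (V a)]
    [∀ a, FiniteDimensional ℝ (V a)]
    (F : ∀ a b : A, b ≤ a → (V a →L[ℝ] V b))
    (hid : ∀ a, F a a le_rfl = ContinuousLinearMap.id ℝ (V a))
    (hcomp : ∀ a b c : A, ∀ (hba : b ≤ a) (hcb : c ≤ b),
      (F b c hcb).comp (F a b hba) = F a c (hcb.trans hba))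
    (lam : ∀ a, V a →L[ℝ] ℝ) :
    (∀ x : ∀ a, V a, (∀ a b : A, ∀ h : b ≤ a, F a b h (x a) = x b) →
        ∑ a, lam a (x a) = 0)
      ↔
    (∃ l : ∀ a b : A, b ≤ a → (V b →L[ℝ] ℝ), ∀ a,
        lam a = ∑ b : {b : A // b ≤ a}, (l a b.1 b.2).comp (F a b.1 b.2)
                  - ∑ b : {b : A // a ≤ b}, l b.1 a b.2) := by
  constructor
  · intro hann
    -- index type of pairs b ≤ a
    let P := Σ a : A, {b : A // b ≤ a}
    let W : P → Type _ := fun p => V p.2.1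
    -- the map whose kernel is lim F
    let g : (∀ a, V a) →ₗ[ℝ] ∀ p : P, W p :=
      LinearMap.pi fun p => ((F p.1 p.2.1 p.2.2).toLinearMap.comp (LinearMap.proj p.1)
        - LinearMap.proj p.2.1)
    have hg : ∀ x (p : P), g x p = F p.1 p.2.1 p.2.2 (x p.1) - x p.2.1 := fun x p => rfl
    -- the total functional
    let lt : (∀ a, V a) →ₗ[ℝ] ℝ :=
      ∑ a, (lam a).toLinearMap.comp (LinearMap.proj a)
    have hlt : ∀ x, lt x = ∑ a, lam a (x a) := by
      intro x; simp [lt, LinearMap.sum_apply]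
    have hker : LinearMap.ker g ≤ LinearMap.ker lt := by
      intro x hx
      rw [LinearMap.mem_ker] at hx ⊢
      rw [hlt]
      apply hann
      intro a b h
      have h2 := congrFun hx ⟨a, b, h⟩
      rw [hg] at h2
      simpa [sub_eq_zero] using h2
    obtain ⟨r, hr⟩ := LinearMap.exists_leftInverse_of_injective
      ((LinearMap.ker g).liftQ g le_rfl) (Submodule.ker_liftQ_eq_bot _ _ _ le_rfl)
    let φ : (∀ p : P, W p) →ₗ[ℝ] ℝ := ((LinearMap.ker g).liftQ lt hker) ∘ₗ r
    have hφ : ∀ x, φ (g x) = lt x := by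
      intro x
      have h1 : g x = ((LinearMap.ker g).liftQ g le_rfl) ((LinearMap.ker g).mkQ x) := rfl
      rw [h1]
      show (((LinearMap.ker g).liftQ lt hker) ∘ₗ (r ∘ₗ (LinearMap.ker g).liftQ g le_rfl))
        ((LinearMap.ker g).mkQ x) = _
      rw [hr]
      simp
    refine ⟨fun a b h => LinearMap.toContinuousLinearMap
      (φ ∘ₗ LinearMap.single ℝ W ⟨a, b, h⟩), ?_⟩
    intro a
    ext v
    -- sum over sigma type
    have hsig : ∀ f : P → ℝ, ∑ p : P, f p = ∑ c : A, ∑ b : {b // b ≤ c}, f ⟨c, b⟩ := by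
      intro f
      exact Finset.sum_sigma Finset.univ (fun _ => Finset.univ) f
    have step1 : lam a v = φ (g (Pi.single a v)) := by
      rw [hφ, hlt]
      have h0 : ∀ b ∈ Finset.univ, b ≠ a → lam b (Pi.single a v b) = 0 := by
        intro b _ hb; rw [Pi.single_eq_of_ne hb, map_zero]
      rw [Finset.sum_eq_single_of_mem a (Finset.mem_univ a) h0, Pi.single_eq_same]
    have step2 : φ (g (Pi.single a v)) =
        ∑ p : P, φ (Pi.single p (g (Pi.single a v) p)) := by
      conv_lhs => rw [← Finset.univ_sum_single (g (Pi.single a v))]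
      rw [map_sum]
    have step3 : ∀ p : P, φ (Pi.single p (g (Pi.single a v) p)) =
        φ (Pi.single p (F p.1 p.2.1 p.2.2 (Pi.single a v p.1)))
          - φ (Pi.single p ((Pi.single a v) p.2.1)) := by
      intro p
      rw [hg]
      have : (Pi.single p (F p.1 p.2.1 p.2.2 (Pi.single a v p.1) - Pi.single a v p.2.1) :
          ∀ q : P, W q) = Pi.single p (F p.1 p.2.1 p.2.2 (Pi.single a v p.1))
            - Pi.single p ((Pi.single a v) p.2.1) := by
        rw [← Pi.single_sub]
      rw [this, map_sub]
    have T1 : ∑ p : P, φ (Pi.single p (F p.1 p.2.1 p.2.2 (Pi.single a v p.1))) =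
        ∑ b : {b // b ≤ a}, φ (Pi.single (⟨a, b⟩ : P) (F a b.1 b.2 v)) := by
      rw [hsig]
      have h0 : ∀ c ∈ Finset.univ, c ≠ a →
          (∑ b : {b // b ≤ c}, φ (Pi.single (⟨c, b⟩ : P)
            (F c b.1 b.2 (Pi.single a v c)))) = 0 := by
        intro c _ hc
        refine Finset.sum_eq_zero fun b _ => ?_
        rw [Pi.single_eq_of_ne hc, map_zero, Pi.single_zero, map_zero]
      rw [Finset.sum_eq_single_of_mem a (Finset.mem_univ a) h0]
      refine Finset.sum_congr rfl fun b _ => ?_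
      rw [Pi.single_eq_same]
    have T2 : ∑ p : P, φ (Pi.single p ((Pi.single a v) p.2.1)) =
        ∑ b : {b // a ≤ b}, φ (Pi.single (⟨b.1, a, b.2⟩ : P) v) := by
      rw [hsig]
      have inner : ∀ c : A, ∑ b : {b // b ≤ c},
          φ (Pi.single (⟨c, b⟩ : P) ((Pi.single a v) b.1)) =
          if h : a ≤ c then φ (Pi.single (⟨c, a, h⟩ : P) v) else 0 := by
        intro c
        rw [my_sum_subtype_dite (fun b => b ≤ c)
          (fun b hb => φ (Pi.single (⟨c, b, hb⟩ : P) ((Pi.single a v) b)))]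
        have h0 : ∀ b ∈ Finset.univ, b ≠ a →
            (if hb : b ≤ c then φ (Pi.single (⟨c, b, hb⟩ : P) ((Pi.single a v) b)) else 0)
              = 0 := by
          intro b _ hb
          simp [Pi.single_eq_of_ne hb]
        rw [Finset.sum_eq_single_of_mem a (Finset.mem_univ a) h0]
        simp only [Pi.single_eq_same]
      rw [Finset.sum_congr rfl fun c _ => inner c]
      rw [← my_sum_subtype_dite (fun c => a ≤ c) (fun c hc => φ (Pi.single (⟨c, a, hc⟩ : P) v))]
    rw [step1, step2, Finset.sum_congr rfl fun p _ => step3 p, Finset.sum_sub_distrib, T1, T2]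
    simp only [ContinuousLinearMap.coe_sub', Pi.sub_apply, ContinuousLinearMap.coe_sum',
      Finset.sum_apply, ContinuousLinearMap.coe_comp', Function.comp_apply,
      LinearMap.coe_toContinuousLinearMap', LinearMap.coe_comp, LinearMap.coe_single]
  · rintro ⟨l, hl⟩ x hx
    have e1 : ∀ a, lam a (x a) = (∑ b : A, if h : b ≤ a then l a b h (x b) else 0)
        - (∑ b : A, if h : a ≤ b then l b a h (x a) else 0) := by
      intro a
      rw [hl a]
      simp only [ContinuousLinearMap.coe_sub', Pi.sub_apply, ContinuousLinearMap.coe_sum',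
        Finset.sum_apply, ContinuousLinearMap.coe_comp', Function.comp_apply]
      rw [my_sum_subtype_dite (fun b => b ≤ a) (fun b h => l a b h (F a b h (x a))),
          my_sum_subtype_dite (fun b => a ≤ b) (fun b h => l b a h (x a))]
      congr 1
      refine Finset.sum_congr rfl fun b _ => ?_
      by_cases h : b ≤ a
      · rw [dif_pos h, dif_pos h, hx a b h]
      · rw [dif_neg h, dif_neg h]
    rw [Finset.sum_congr rfl fun a _ => e1 a, Finset.sum_sub_distrib]
    rw [Finset.sum_comm (s := Finset.univ) (t := Finset.univ)
      (f := fun a b => if h : a ≤ b then l b a h (x a) else 0)]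
    exact sub_self _
end

section
/- Let A be a finite partial order with incidence-algebra Möbius function μ, let F be a cofunctor from A to finite-dimensional real normed vector spaces, let (f_a : F(a) → ℝ)_{a∈A} be differentiable functions, and set c(a) = Σ_{b ≥ a} μ(b,a). Then x ∈ lim F is a critical point of the Regionalized loss f_R(x) = Σ_{a∈A} c(a)·f_a(x_a) on lim F — i.e. Σ_{a∈A} c(a)·(Df_a(x_a))(u_a) = 0 for every u ∈ lim F — if and only if there exists a family l = (l_{a→b})_{b ≤ a}, with l_{a→b} a continuous linear form on F(b), such that for every a ∈ A the Fréchet derivative of f_a at x_a satisfies Df_a(x_a) = Σ_{b ≤ a} ( Σ_{c ≤ b} l_{b→c} ∘ F^b_c − Σ_{c ≥ b} l_{c→b} ) ∘ F^a_b. -/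
open Finset IncidenceAlgebra

private lemma sum_dite_subtype_aux {α M : Type*} [Fintype α] [AddCommMonoid M]
    (p : α → Prop) [DecidablePred p] (g : ∀ a, p a → M) :
    ∑ a : {a // p a}, g a.1 a.2 = ∑ a : α, if h : p a then g a h else 0 := by
  classical
  rw [← Finset.sum_subset (Finset.filter_subset p Finset.univ)
      (fun x _ hx => by
        rw [Finset.mem_filter] at hx
        exact dif_neg fun hp => hx ⟨Finset.mem_univ x, hp⟩)]
  rw [Finset.sum_subtype (p := p) _ (by simp) (fun a => if h : p a then g a h else 0)]
  exact Finset.sum_congr rfl fun a _ => by rw [dif_pos a.2]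

private lemma exists_factor_of_ker_le {P Q : Type*} [AddCommGroup P] [Module ℝ P]
    [AddCommGroup Q] [Module ℝ Q] (D : P →ₗ[ℝ] Q) (g : P →ₗ[ℝ] ℝ)
    (hker : ∀ u, D u = 0 → g u = 0) : ∃ m : Q →ₗ[ℝ] ℝ, ∀ u, m (D u) = g u := by
  have hle : LinearMap.ker D ≤ LinearMap.ker g := fun u hu =>
    LinearMap.mem_ker.2 (hker u (LinearMap.mem_ker.1 hu))
  set gbar := Submodule.liftQ (LinearMap.ker D) g hle
  set e := D.quotKerEquivRange
  obtain ⟨m, hm⟩ := LinearMap.exists_extend (gbar.comp (e.symm.toLinearMap))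
  refine ⟨m, fun u => ?_⟩
  have h1 : D u = (LinearMap.range D).subtype ⟨D u, LinearMap.mem_range_self D u⟩ := rfl
  rw [h1, ← LinearMap.comp_apply, hm]
  have h2 : e (Submodule.Quotient.mk u) = ⟨D u, LinearMap.mem_range_self D u⟩ :=
    Subtype.ext (D.quotKerEquivRange_apply_mk u)
  simp only [LinearMap.comp_apply, LinearEquiv.coe_coe, ← h2, LinearEquiv.symm_apply_apply]
  exact Submodule.liftQ_apply _ g u

section
variable {A : Type*} [PartialOrder A] [DecidableEq A]
    [LocallyFiniteOrder A] [DecidableRel ((· ≤ ·) : A → A → Prop)]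

private lemma mobius_mu_zeta (c a : A) :
    ∑ b ∈ Icc c a, mu ℝ c b = if c = a then (1 : ℝ) else 0 := by
  by_cases h : c ≤ a
  · have := congrFun (congrFun (congrArg (DFunLike.coe)
      (mu_mul_zeta (𝕜 := ℝ) (α := A))) c) a
    rw [mul_apply, one_apply] at this
    rw [← this]
    refine Finset.sum_congr rfl fun b hb => ?_
    rw [mem_Icc] at hb
    simp [zeta_apply, hb.2]
  · rw [Icc_eq_empty h, Finset.sum_empty, if_neg (fun hc => h (le_of_eq hc))]

private lemma mobius_zeta_mu (b d : A) :
    ∑ a ∈ Icc b d, mu ℝ a d = if b = d then (1 : ℝ) else 0 := by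
  by_cases h : b ≤ d
  · have := congrFun (congrFun (congrArg (DFunLike.coe)
      (zeta_mul_mu (𝕜 := ℝ) (α := A))) b) d
    rw [mul_apply, one_apply] at this
    rw [← this]
    refine Finset.sum_congr rfl fun a ha => ?_
    rw [mem_Icc] at ha
    simp [zeta_apply, ha.1]
  · rw [Icc_eq_empty h, Finset.sum_empty, if_neg (fun hc => h (le_of_eq hc))]

variable (V : A → Type*) [∀ a, NormedAddCommGroup (V a)] [∀ a, NormedSpace ℝ (V a)]

private def pairsD (F : ∀ a b : A, b ≤ a → (V a →L[ℝ] V b)) :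
    (∀ a, V a) →ₗ[ℝ] (∀ p : Σ a : A, {b : A // b ≤ a}, V p.2.1) where
  toFun u p := F p.1 p.2.1 p.2.2 (u p.1) - u p.2.1
  map_add' u v := by funext p; simp [Pi.add_apply]; abel
  map_smul' r u := by funext p; simp [Pi.smul_apply, smul_sub]

private def gfun [Fintype A] (F : ∀ a b : A, b ≤ a → (V a →L[ℝ] V b))
    (φ : ∀ a, V a →L[ℝ] ℝ) : (∀ a, V a) →ₗ[ℝ] ℝ where
  toFun u := ∑ a : A, ∑ b : {b : A // b ≤ a}, mu ℝ b.1 a * φ b.1 (F a b.1 b.2 (u a))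
  map_add' u v := by
    simp only [Pi.add_apply, map_add, mul_add]
    rw [← Finset.sum_add_distrib]
    exact Finset.sum_congr rfl fun a _ => by rw [← Finset.sum_add_distrib]
  map_smul' r u := by
    simp only [Pi.smul_apply, map_smul, smul_eq_mul, RingHom.id_apply, Finset.mul_sum]
    exact Finset.sum_congr rfl fun a _ => Finset.sum_congr rfl fun b _ => by ring

end

/-- **Characterization of critical points of the Regionalized loss via Lagrange
multipliers (messages).**  `A` is a finite partial order with incidence-algebra Möbius
function `mu ℝ` (the paper's `μ(a,b)` for `b ≤ a` is `mu ℝ b a`), `F` is a cofunctor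
from `A` to finite-dimensional real normed vector spaces, the `f a : F a → ℝ` are
differentiable and `c a = Σ_{b ≥ a} μ(b,a)`.  A point `x ∈ lim F` is a critical point of
`f_R = Σ_a c(a)·f_a` on `lim F` iff there is a family `l = (l_{a→b})_{b ≤ a}` of
continuous linear forms (`l_{a→b}` on `F b`) with
`Df_a(x_a) = Σ_{b ≤ a} ( Σ_{c ≤ b} l_{b→c} ∘ F^b_c − Σ_{c ≥ b} l_{c→b} ) ∘ F^a_b`. -/
theorem criticalPoint_iff_exists_messages
    {A : Type*} [Fintype A] [PartialOrder A] [DecidableEq A]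
    [LocallyFiniteOrder A] [DecidableRel ((· ≤ ·) : A → A → Prop)]
    (V : A → Type*) [∀ a, NormedAddCommGroup (V a)] [∀ a, NormedSpace ℝ (V a)]
    [∀ a, FiniteDimensional ℝ (V a)]
    (F : ∀ a b : A, b ≤ a → (V a →L[ℝ] V b))
    (hid : ∀ a, F a a le_rfl = ContinuousLinearMap.id ℝ (V a))
    (hcomp : ∀ a b c : A, ∀ (hba : b ≤ a) (hcb : c ≤ b),
      (F b c hcb).comp (F a b hba) = F a c (hcb.trans hba))
    (f : ∀ a, V a → ℝ) (hf : ∀ a, Differentiable ℝ (f a))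
    (x : ∀ a, V a) (hx : ∀ a b : A, ∀ h : b ≤ a, F a b h (x a) = x b) :
    (∀ u : ∀ a, V a, (∀ a b : A, ∀ h : b ≤ a, F a b h (u a) = u b) →
        ∑ a, (∑ b : {b : A // a ≤ b}, mu ℝ a b.1) * fderiv ℝ (f a) (x a) (u a) = 0)
      ↔
    (∃ l : ∀ a b : A, b ≤ a → (V b →L[ℝ] ℝ), ∀ a,
        fderiv ℝ (f a) (x a)
          = ∑ b : {b : A // b ≤ a},
              ((∑ c : {c : A // c ≤ b.1}, (l b.1 c.1 c.2).comp (F b.1 c.1 c.2))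
                - ∑ c : {c : A // b.1 ≤ c}, l c.1 b.1 c.2).comp (F a b.1 b.2)) := by
  classical
  -- the "coefficient sum one" lemma : ∑_{a ≥ b} c a = 1
  have hcoef : ∀ b : A,
      (∑ a : A, if b ≤ a then (∑ d : {d : A // a ≤ d}, mu ℝ a d.1) else 0) = 1 := by
    intro b
    have h1 : ∀ a : A, (if b ≤ a then (∑ d : {d : A // a ≤ d}, mu ℝ a d.1) else 0)
        = ∑ d : A, if b ≤ a ∧ a ≤ d then mu ℝ a d else 0 := by
      intro a
      by_cases hba : b ≤ a
      · rw [if_pos hba, sum_dite_subtype_aux (fun d => a ≤ d) (fun d _ => mu ℝ a d)]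
        exact Finset.sum_congr rfl fun d _ => by
          by_cases had : a ≤ d
          · rw [dif_pos had, if_pos ⟨hba, had⟩]
          · rw [dif_neg had, if_neg (fun hc => had hc.2)]
      · rw [if_neg hba]
        exact (Finset.sum_eq_zero fun d _ => if_neg (fun hc => hba hc.1)).symm
    simp_rw [h1]
    rw [Finset.sum_comm]
    have h2 : ∀ d : A, (∑ a : A, if b ≤ a ∧ a ≤ d then mu ℝ a d else 0)
        = if b = d then (1 : ℝ) else 0 := by
      intro d
      rw [← mobius_zeta_mu b d]
      simp_rw [← Finset.mem_Icc]
      rw [Finset.sum_ite_mem, Finset.univ_inter]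
    simp_rw [h2]
    simp
  constructor
  · -- forward direction
    intro hcrit
    -- Step A: the functional g vanishes on the kernel of D
    have hker : ∀ u, pairsD V F u = 0
        → gfun V F (fun a => fderiv ℝ (f a) (x a)) u = 0 := by
      intro u hu0
      have hu : ∀ a b : A, ∀ h : b ≤ a, F a b h (u a) = u b := by
        intro a b h
        have := congrFun hu0 ⟨a, ⟨b, h⟩⟩
        simpa [pairsD, sub_eq_zero] using this
      show ∑ a : A, ∑ b : {b : A // b ≤ a},
          mu ℝ b.1 a * fderiv ℝ (f b.1) (x b.1) (F a b.1 b.2 (u a)) = 0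
      simp_rw [hu]
      have h1 : ∀ a : A, (∑ b : {b : A // b ≤ a},
            mu ℝ b.1 a * fderiv ℝ (f b.1) (x b.1) (u b.1))
          = ∑ b : A, if b ≤ a then mu ℝ b a * fderiv ℝ (f b) (x b) (u b) else 0 := by
        intro a
        rw [sum_dite_subtype_aux (fun b => b ≤ a)
          (fun b _ => mu ℝ b a * fderiv ℝ (f b) (x b) (u b))]
        refine Finset.sum_congr rfl fun b _ => ?_
        by_cases hba : b ≤ a
        · rw [dif_pos hba, if_pos hba]
        · rw [dif_neg hba, if_neg hba]
      simp_rw [h1]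
      rw [Finset.sum_comm]
      have h2 : ∀ b : A, (∑ a : A, if b ≤ a then
            mu ℝ b a * fderiv ℝ (f b) (x b) (u b) else 0)
          = (∑ a : {a : A // b ≤ a}, mu ℝ b a.1) * fderiv ℝ (f b) (x b) (u b) := by
        intro b
        rw [sum_dite_subtype_aux (fun a => b ≤ a) (fun a _ => mu ℝ b a), Finset.sum_mul]
        refine Finset.sum_congr rfl fun a _ => ?_
        by_cases hba : b ≤ a
        · rw [if_pos hba, dif_pos hba]
        · rw [if_neg hba, dif_neg hba, zero_mul]
      simp_rw [h2]
      exact hcrit u hu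
    -- Step B: factor through D
    obtain ⟨m, hm⟩ := exists_factor_of_ker_le (pairsD V F)
      (gfun V F (fun a => fderiv ℝ (f a) (x a))) hker
    -- Step C: the messages
    set l₀ : ∀ a b : A, b ≤ a → (V b →L[ℝ] ℝ) := fun a b h =>
      LinearMap.toContinuousLinearMap
        (m ∘ₗ LinearMap.single ℝ (fun p : Σ a : A, {b : A // b ≤ a} => V p.2.1) ⟨a, ⟨b, h⟩⟩)
      with hl₀def
    have hl₀ : ∀ (a b : A) (h : b ≤ a) (v : V b),
        l₀ a b h v = m (Pi.single (⟨a, ⟨b, h⟩⟩ : Σ a : A, {b : A // b ≤ a}) v) := by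
      intro a b h v
      rw [hl₀def]
      simp [LinearMap.coe_toContinuousLinearMap']
    have hmq : ∀ q : (∀ p : Σ a : A, {b : A // b ≤ a}, V p.2.1),
        m q = ∑ p : Σ a : A, {b : A // b ≤ a}, m (Pi.single p (q p)) := by
      intro q
      have : q = ∑ p : Σ a : A, {b : A // b ≤ a}, Pi.single p (q p) := by
        funext j
        rw [Finset.sum_apply]
        exact (Fintype.sum_pi_single j q).symm
      conv_lhs => rw [this]
      rw [map_sum]
    -- Step D: key identity
    have key : ∀ (a : A) (v : V a),
        (∑ b : {b : A // b ≤ a}, l₀ a b.1 b.2 (F a b.1 b.2 v))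
          - (∑ c : {c : A // a ≤ c}, l₀ c.1 a c.2 v)
        = ∑ b : {b : A // b ≤ a},
            mu ℝ b.1 a * fderiv ℝ (f b.1) (x b.1) (F a b.1 b.2 v) := by
      intro a v
      have hmu := hm (Pi.single a v)
      -- compute the right side of hmu
      have hg : gfun V F (fun a => fderiv ℝ (f a) (x a)) (Pi.single a v)
          = ∑ b : {b : A // b ≤ a},
              mu ℝ b.1 a * fderiv ℝ (f b.1) (x b.1) (F a b.1 b.2 v) := by
        show (∑ a' : A, ∑ b : {b : A // b ≤ a'},
            mu ℝ b.1 a' * fderiv ℝ (f b.1) (x b.1) (F a' b.1 b.2 (Pi.single a v a'))) = _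
        rw [Finset.sum_eq_single a]
        · rw [Pi.single_eq_same]
        · intro a' _ ha'
          refine Finset.sum_eq_zero fun b _ => ?_
          rw [Pi.single_eq_of_ne ha', map_zero, map_zero, mul_zero]
        · intro h; exact absurd (Finset.mem_univ a) h
      -- compute the left side of hmu
      have hD : m (pairsD V F (Pi.single a v))
          = (∑ b : {b : A // b ≤ a}, l₀ a b.1 b.2 (F a b.1 b.2 v))
            - (∑ c : {c : A // a ≤ c}, l₀ c.1 a c.2 v) := by
        rw [hmq]
        have hsummand : ∀ p : Σ a' : A, {b : A // b ≤ a'},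
            m (Pi.single p (pairsD V F (Pi.single a v) p))
            = l₀ p.1 p.2.1 p.2.2 (F p.1 p.2.1 p.2.2 (Pi.single a v p.1))
              - l₀ p.1 p.2.1 p.2.2 (Pi.single a v p.2.1) := by
          intro p
          rw [hl₀ p.1 p.2.1 p.2.2, hl₀ p.1 p.2.1 p.2.2]
          rw [← map_sub m, ← Pi.single_sub]
          rfl
        simp_rw [hsummand]
        rw [Finset.sum_sub_distrib]
        congr 1
        · -- first sum
          rw [← Finset.univ_sigma_univ, Finset.sum_sigma]
          rw [Finset.sum_eq_single a]
          · refine Finset.sum_congr rfl fun b _ => ?_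
            simp only [Pi.single_eq_same]
          · intro a' _ ha'
            refine Finset.sum_eq_zero fun b _ => ?_
            rw [Pi.single_eq_of_ne ha', map_zero, map_zero]
          · intro h; exact absurd (Finset.mem_univ a) h
        · -- second sum
          rw [← Finset.univ_sigma_univ, Finset.sum_sigma]
          have hinner : ∀ a' : A, (∑ b : {b : A // b ≤ a'},
              l₀ a' b.1 b.2 (Pi.single a v b.1))
              = if h : a ≤ a' then l₀ a' a h v else 0 := by
            intro a'
            by_cases h : a ≤ a'
            · rw [dif_pos h]
              rw [Finset.sum_eq_single (⟨a, h⟩ : {b : A // b ≤ a'})]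
              · rw [Pi.single_eq_same]
              · intro b _ hb
                have : b.1 ≠ a := fun hba => hb (Subtype.ext hba)
                rw [Pi.single_eq_of_ne this, map_zero]
              · intro hna; exact absurd (Finset.mem_univ _) hna
            · rw [dif_neg h]
              refine Finset.sum_eq_zero fun b _ => ?_
              have : b.1 ≠ a := fun hba => h (hba ▸ b.2)
              rw [Pi.single_eq_of_ne this, map_zero]
          exact (Finset.sum_congr rfl fun a' _ => hinner a').trans
            (sum_dite_subtype_aux (fun c => a ≤ c) (fun c h => l₀ c a h v)).symm
      rw [hD, hg] at hmu
      exact hmu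
    -- Step E: conclude
    refine ⟨l₀, fun a => ?_⟩
    ext v
    have hFF : ∀ (a b c : A) (hba : b ≤ a) (hcb : c ≤ b) (w : V a),
        F b c hcb (F a b hba w) = F a c (hcb.trans hba) w := by
      intro a b c hba hcb w
      rw [← hcomp a b c hba hcb]
      rfl
    rw [ContinuousLinearMap.sum_apply]
    simp only [ContinuousLinearMap.coe_comp', Function.comp_apply,
      ContinuousLinearMap.coe_sub', Pi.sub_apply]
    have hterm : ∀ b : {b : A // b ≤ a},
        ((∑ c : {c : A // c ≤ b.1}, (l₀ b.1 c.1 c.2).comp (F b.1 c.1 c.2)) (F a b.1 b.2 v))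
          - (∑ c : {c : A // b.1 ≤ c}, l₀ c.1 b.1 c.2) (F a b.1 b.2 v)
        = ∑ c : {c : A // c ≤ b.1},
            mu ℝ c.1 b.1 * fderiv ℝ (f c.1) (x c.1) (F a c.1 (c.2.trans b.2) v) := by
      intro b
      rw [ContinuousLinearMap.sum_apply, ContinuousLinearMap.sum_apply]
      simp only [ContinuousLinearMap.coe_comp', Function.comp_apply]
      have := key b.1 (F a b.1 b.2 v)
      rw [this]
      refine Finset.sum_congr rfl fun c _ => ?_
      rw [hFF a b.1 c.1 b.2 c.2 v]
    simp_rw [hterm]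
    -- now collapse the double sum using Möbius inversion
    have hd1 : (∑ b : {b : A // b ≤ a}, ∑ c : {c : A // c ≤ b.1},
          mu ℝ c.1 b.1 * fderiv ℝ (f c.1) (x c.1) (F a c.1 (c.2.trans b.2) v))
        = ∑ b : A, ∑ c : A, if hc : c ≤ a then
            (if c ≤ b ∧ b ≤ a then mu ℝ c b else 0)
              * fderiv ℝ (f c) (x c) (F a c hc v) else 0 := by
      rw [sum_dite_subtype_aux (fun b => b ≤ a) (fun b hb => ∑ c : {c : A // c ≤ b},
        mu ℝ c.1 b * fderiv ℝ (f c.1) (x c.1) (F a c.1 (c.2.trans hb) v))]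
      refine Finset.sum_congr rfl fun b _ => ?_
      by_cases hb : b ≤ a
      · rw [dif_pos hb]
        rw [sum_dite_subtype_aux (fun c => c ≤ b) (fun c hc =>
          mu ℝ c b * fderiv ℝ (f c) (x c) (F a c (hc.trans hb) v))]
        refine Finset.sum_congr rfl fun c _ => ?_
        by_cases hcb : c ≤ b
        · rw [dif_pos hcb, dif_pos (hcb.trans hb), if_pos ⟨hcb, hb⟩]
        · rw [dif_neg hcb]
          by_cases hca : c ≤ a
          · rw [dif_pos hca, if_neg (fun hh => hcb hh.1), zero_mul]
          · rw [dif_neg hca]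
      · rw [dif_neg hb]
        refine (Finset.sum_eq_zero fun c _ => ?_).symm
        by_cases hca : c ≤ a
        · rw [dif_pos hca, if_neg (fun hh => hb hh.2), zero_mul]
        · rw [dif_neg hca]
    rw [hd1, Finset.sum_comm]
    have hd2 : ∀ c : A, (∑ b : A, if hc : c ≤ a then
          (if c ≤ b ∧ b ≤ a then mu ℝ c b else 0)
            * fderiv ℝ (f c) (x c) (F a c hc v) else 0)
        = if hc : c ≤ a then
            (if c = a then (1:ℝ) else 0) * fderiv ℝ (f c) (x c) (F a c hc v) else 0 := by
      intro c
      by_cases hca : c ≤ a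
      · simp only [dif_pos hca]
        rw [← Finset.sum_mul]
        congr 1
        rw [← mobius_mu_zeta c a]
        simp_rw [← Finset.mem_Icc]
        rw [Finset.sum_ite_mem, Finset.univ_inter]
      · simp only [dif_neg hca, Finset.sum_const_zero]
    simp_rw [hd2]
    rw [Finset.sum_eq_single a]
    · rw [dif_pos le_rfl, if_pos rfl, one_mul]
      have : F a a le_rfl v = v := by rw [hid]; rfl
      rw [this]
    · intro c _ hc
      by_cases hca : c ≤ a
      · rw [dif_pos hca, if_neg hc, zero_mul]
      · rw [dif_neg hca]
    · intro h; exact absurd (Finset.mem_univ a) h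
  · -- backward direction
    rintro ⟨l, hl⟩ u hu
    set t : A → ℝ := fun b =>
      (∑ c : {c : A // c ≤ b}, l b c.1 c.2 (u c.1))
        - ∑ c : {c : A // b ≤ c}, l c.1 b c.2 (u b) with htdef
    have key : ∀ a, fderiv ℝ (f a) (x a) (u a) = ∑ b : {b : A // b ≤ a}, t b.1 := by
      intro a
      rw [hl a]
      simp only [ContinuousLinearMap.sum_apply, ContinuousLinearMap.coe_sub',
        Pi.sub_apply, ContinuousLinearMap.coe_comp', Function.comp_apply, hu, htdef]
    simp_rw [key]
    have swap : ∑ a : A, (∑ b : {b : A // a ≤ b}, mu ℝ a b.1) * ∑ b : {b : A // b ≤ a}, t b.1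
        = ∑ b : A, (∑ a : A, if b ≤ a then (∑ d : {d : A // a ≤ d}, mu ℝ a d.1) else 0) * t b := by
      have h1 : ∀ a : A, (∑ b : {b : A // a ≤ b}, mu ℝ a b.1) * ∑ b : {b : A // b ≤ a}, t b.1
          = ∑ b : A, if b ≤ a then (∑ d : {d : A // a ≤ d}, mu ℝ a d.1) * t b else 0 := by
        intro a
        rw [Finset.mul_sum, sum_dite_subtype_aux (fun b => b ≤ a)
          (fun b _ => (∑ d : {d : A // a ≤ d}, mu ℝ a d.1) * t b)]
        refine Finset.sum_congr rfl fun b _ => ?_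
        by_cases hba : b ≤ a
        · rw [dif_pos hba, if_pos hba]
        · rw [dif_neg hba, if_neg hba]
      simp_rw [h1]
      rw [Finset.sum_comm]
      refine Finset.sum_congr rfl fun b _ => ?_
      rw [Finset.sum_mul]
      refine Finset.sum_congr rfl fun a _ => ?_
      rw [ite_mul, zero_mul]
    rw [swap]
    simp_rw [hcoef, one_mul]
    -- now ∑ b, t b = 0
    rw [htdef]
    simp only []
    rw [Finset.sum_sub_distrib]
    have e1 : ∀ b : A, (∑ c : {c : A // c ≤ b}, l b c.1 c.2 (u c.1))
        = ∑ c : A, if h : c ≤ b then l b c h (u c) else 0 := fun b =>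
      sum_dite_subtype_aux (fun c => c ≤ b) (fun c h => l b c h (u c))
    have e2 : ∀ b : A, (∑ c : {c : A // b ≤ c}, l c.1 b c.2 (u b))
        = ∑ c : A, if h : b ≤ c then l c b h (u b) else 0 := fun b =>
      sum_dite_subtype_aux (fun c => b ≤ c) (fun c h => l c b h (u b))
    simp_rw [e1, e2]
    rw [Finset.sum_comm (f := fun b c => if h : b ≤ c then l c b h (u b) else 0)]
    rw [sub_eq_zero]
end

section
/- (Abstract Gauss formula) Let A be a finite partial order and let F be a cofunctor from A to finite-dimensional real normed vector spaces. Define d_F(l)(a) = Σ_{b ≤ a} (l_{a→b} ∘ F^a_b) − Σ_{b ≥ a} l_{b→a} for a family l = (l_{a→b})_{b ≤ a} of linear forms (l_{a→b} on F(b)), and define ζ_{F*}(m)(a) = Σ_{b ≤ a} m_b ∘ F^a_b for a family m = (m_b)_{b∈A} of linear forms (m_b on F(b)). Then for every family l and every a ∈ A: ζ_{F*}(d_F l)(a) = − Σ_{b ≤ a} Σ_{c : c ≥ b and c ≰ a} l_{c→b} ∘ F^a_b, i.e. Σ_{b ≤ a} ( Σ_{c ≤ b} l_{b→c} ∘ F^b_c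 − Σ_{c ≥ b} l_{c→b} ) ∘ F^a_b = − Σ_{b ≤ a} Σ_{c : c ≥ b, ¬(c ≤ a)} l_{c→b} ∘ F^a_b. -/
open Finset


private lemma sum_subtype_dep' {A : Type*} [Fintype A] {p : A → Prop} [DecidablePred p]
    (f : ∀ b, p b → ℝ) :
    ∑ b : {b // p b}, f b.1 b.2 = ∑ b ∈ univ.filter p, if h : p b then f b h else 0 := by
  rw [show (∑ b ∈ univ.filter p, if h : p b then f b h else 0)
        = ∑ b : {b // p b}, if h : p b.1 then f b.1 h else 0 from
      Finset.sum_subtype _ (by simp) _]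
  exact Finset.sum_congr rfl fun b _ => (dif_pos b.2).symm

private lemma sum_split' {A : Type*} [Fintype A] {p q : A → Prop}
    [DecidablePred p] [DecidablePred q] (f : ∀ b, p b → ℝ) :
    ∑ b : {b // p b}, f b.1 b.2
      = (∑ b : {b // p b ∧ q b}, f b.1 b.2.1)
        + ∑ b : {b // p b ∧ ¬ q b}, f b.1 b.2.1 := by
  rw [sum_subtype_dep' f, sum_subtype_dep' (fun b (h : p b ∧ q b) => f b h.1),
      sum_subtype_dep' (fun b (h : p b ∧ ¬ q b) => f b h.1),
      ← Finset.sum_filter_add_sum_filter_not (univ.filter p) q]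
  congr 1
  · rw [Finset.filter_filter]
    refine Finset.sum_congr rfl fun b hb => ?_
    simp only [mem_filter] at hb
    rw [dif_pos hb.2, dif_pos hb.2.1]
  · rw [Finset.filter_filter]
    refine Finset.sum_congr rfl fun b hb => ?_
    simp only [mem_filter] at hb
    rw [dif_pos hb.2, dif_pos hb.2.1]

private lemma sum_swap_tri {A : Type*} [Fintype A] [PartialOrder A]
    [DecidableRel ((· ≤ ·) : A → A → Prop)] (a : A)
    (f : ∀ b c : A, c ≤ b → b ≤ a → ℝ) :
    ∑ b : {b : A // b ≤ a}, ∑ c : {c : A // c ≤ b.1}, f b.1 c.1 c.2 b.2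
      = ∑ b : {b : A // b ≤ a}, ∑ c : {c : A // b.1 ≤ c ∧ c ≤ a},
          f c.1 b.1 c.2.1 c.2.2 := by
  let e : (Σ b : {b : A // b ≤ a}, {c : A // c ≤ b.1})
      ≃ (Σ b : {b : A // b ≤ a}, {c : A // b.1 ≤ c ∧ c ≤ a}) :=
    { toFun := fun p => ⟨⟨p.2.1, p.2.2.trans p.1.2⟩, ⟨p.1.1, p.2.2, p.1.2⟩⟩
      invFun := fun p => ⟨⟨p.2.1, p.2.2.2⟩, ⟨p.1.1, p.2.2.1⟩⟩
      left_inv := fun p => rfl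
      right_inv := fun p => rfl }
  calc ∑ b : {b : A // b ≤ a}, ∑ c : {c : A // c ≤ b.1}, f b.1 c.1 c.2 b.2
      = ∑ p : Σ b : {b : A // b ≤ a}, {c : A // c ≤ b.1},
          f p.1.1 p.2.1 p.2.2 p.1.2 := by
        rw [← Finset.univ_sigma_univ, Finset.sum_sigma]
    _ = ∑ p : Σ b : {b : A // b ≤ a}, {c : A // b.1 ≤ c ∧ c ≤ a},
          f p.2.1 p.1.1 p.2.2.1 p.2.2.2 :=
        Fintype.sum_equiv e _ _ (by rintro ⟨⟨b, hb⟩, ⟨c, hc⟩⟩; rfl)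
    _ = _ := by rw [← Finset.univ_sigma_univ, Finset.sum_sigma]

/-- **Abstract Gauss formula.**  `A` is a finite partial order and `F` a cofunctor from
`A` to finite-dimensional real normed vector spaces.  With
`d_F(l)(b) = Σ_{c ≤ b} l_{b→c} ∘ F^b_c − Σ_{c ≥ b} l_{c→b}` and
`ζ_{F*}(m)(a) = Σ_{b ≤ a} m_b ∘ F^a_b`, for every family `l` of continuous linear forms
and every `a`:
`ζ_{F*}(d_F l)(a) = − Σ_{b ≤ a} Σ_{c ≥ b, c ≰ a} l_{c→b} ∘ F^a_b`. -/
theorem gauss_formula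
    {A : Type*} [Fintype A] [PartialOrder A] [DecidableEq A]
    [DecidableRel ((· ≤ ·) : A → A → Prop)]
    (V : A → Type*) [∀ a, NormedAddCommGroup (V a)] [∀ a, NormedSpace ℝ (V a)]
    [∀ a, FiniteDimensional ℝ (V a)]
    (F : ∀ a b : A, b ≤ a → (V a →L[ℝ] V b))
    (hid : ∀ a, F a a le_rfl = ContinuousLinearMap.id ℝ (V a))
    (hcomp : ∀ a b c : A, ∀ (hba : b ≤ a) (hcb : c ≤ b),
      (F b c hcb).comp (F a b hba) = F a c (hcb.trans hba))
    (l : ∀ a b : A, b ≤ a → (V b →L[ℝ] ℝ)) (a : A) :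
    ∑ b : {b : A // b ≤ a},
        ((∑ c : {c : A // c ≤ b.1}, (l b.1 c.1 c.2).comp (F b.1 c.1 c.2))
          - ∑ c : {c : A // b.1 ≤ c}, l c.1 b.1 c.2).comp (F a b.1 b.2)
      = - ∑ b : {b : A // b ≤ a},
            ∑ c : {c : A // b.1 ≤ c ∧ ¬ c ≤ a},
              (l c.1 b.1 c.2.1).comp (F a b.1 b.2) := by
  ext x
  simp only [ContinuousLinearMap.coe_sum', Finset.sum_apply, ContinuousLinearMap.coe_comp',
    Function.comp_apply, ContinuousLinearMap.sub_apply, ContinuousLinearMap.neg_apply]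
  have hFF : ∀ (b c : A) (hb : b ≤ a) (hc : c ≤ b),
      F b c hc (F a b hb x) = F a c (hc.trans hb) x := fun b c hb hc => by
    rw [← ContinuousLinearMap.comp_apply, hcomp]
  simp only [hFF]
  rw [Finset.sum_sub_distrib]
  have hswap := sum_swap_tri a
    (fun b c (hcb : c ≤ b) (hba : b ≤ a) => l b c hcb ((F a c (hcb.trans hba)) x))
  rw [hswap]
  have hsplit : ∀ b : {b : A // b ≤ a},
      (∑ c : {c : A // b.1 ≤ c}, l c.1 b.1 c.2 ((F a b.1 b.2) x))
        = (∑ c : {c : A // b.1 ≤ c ∧ c ≤ a}, l c.1 b.1 c.2.1 ((F a b.1 b.2) x))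
          + ∑ c : {c : A // b.1 ≤ c ∧ ¬ c ≤ a}, l c.1 b.1 c.2.1 ((F a b.1 b.2) x) :=
    fun b => sum_split' (q := fun c => c ≤ a) (fun c hc => l c b.1 hc ((F a b.1 b.2) x))
  rw [Finset.sum_congr rfl (fun b _ => hsplit b), Finset.sum_add_distrib]
  ring
end

section
/- Let A be a finite partial order with incidence-algebra Möbius function μ, let F be a cofunctor from A to finite-dimensional real normed vector spaces, let (f_a : F(a) → ℝ)_{a∈A} be differentiable functions, and set c(a) = Σ_{b ≥ a} μ(b,a). Suppose g = (g_a)_{a∈A}, with g_a mapping continuous linear forms on F(a) to points of F(a), inverts the differential relation: for all families x = (x_a) and y = (y_a of linear forms), one has (Df_a(x_a) = y_a for all a) if and only if (x_a = g_a(y_a) for all a). Let l* = (l*_{a→b})_{b ≤ a} be a family of linear forms such that the point x* defined by x*_a = g_a( ζ_{F*}(d_F l*)(a) ) satisfies F^a_b(x*_a) = x*_b for all b ≤ a. Then x* ∈ lim F and x* is a critical point of the Regionalized loss f_R(x) = Σ_{a∈A} c(a)·f_a(x_a) on lim F, i.e. Σ_{a∈A} c(a)·(Df_a(x*_a))(u_a)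 = 0 for every u ∈ lim F. -/
open Finset IncidenceAlgebra

lemma sum_subtype_dite' {A : Type*} [Fintype A] {M : Type*} [AddCommMonoid M]
    (p : A → Prop) [DecidablePred p] (f : ∀ a, p a → M) :
    ∑ a : {a : A // p a}, f a.1 a.2 = ∑ a : A, if h : p a then f a h else 0 := by
  have h1 : ∑ a : {a : A // p a}, f a.1 a.2
      = ∑ a : {a : A // p a}, (if h : p a.1 then f a.1 h else 0) := by
    refine Finset.sum_congr rfl fun a _ => ?_
    rw [dif_pos a.2]
  rw [h1, ← Finset.sum_subtype (Finset.filter p Finset.univ) (by simp)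
      (fun a => if h : p a then f a h else 0), Finset.sum_filter]
  refine Finset.sum_congr rfl fun a _ => ?_
  by_cases h : p a <;> simp [h]

/-- **Fixed points of the message-passing scheme are critical points of the
Regionalized loss.**  `A` is a finite partial order with incidence-algebra Möbius
function `mu ℝ` (the paper's `μ(a,b)` for `b ≤ a` is `mu ℝ b a`), `F` is a cofunctor
from `A` to finite-dimensional real normed vector spaces, the `f a : F a → ℝ` are
differentiable, `c a = Σ_{b ≥ a} μ(b,a)`, and `g` inverts the differential relation.
If `l*` is a family of messages such that the point `x*` defined by
`x*_a = g_a(ζ_{F*}(d_F l*)(a))` satisfies `F^a_b(x*_a) = x*_b` for all `b ≤ a`, then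
`x* ∈ lim F` and `x*` is a critical point of `f_R = Σ_a c(a)·f_a` on `lim F`. -/
theorem fixedPoint_isCriticalPoint
    {A : Type*} [Fintype A] [PartialOrder A] [DecidableEq A]
    [LocallyFiniteOrder A] [DecidableRel ((· ≤ ·) : A → A → Prop)]
    (V : A → Type*) [∀ a, NormedAddCommGroup (V a)] [∀ a, NormedSpace ℝ (V a)]
    [∀ a, FiniteDimensional ℝ (V a)]
    (F : ∀ a b : A, b ≤ a → (V a →L[ℝ] V b))
    (hid : ∀ a, F a a le_rfl = ContinuousLinearMap.id ℝ (V a))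
    (hcomp : ∀ a b c : A, ∀ (hba : b ≤ a) (hcb : c ≤ b),
      (F b c hcb).comp (F a b hba) = F a c (hcb.trans hba))
    (f : ∀ a, V a → ℝ) (hf : ∀ a, Differentiable ℝ (f a))
    (g : ∀ a, (V a →L[ℝ] ℝ) → V a)
    (hg : ∀ (x : ∀ a, V a) (y : ∀ a, V a →L[ℝ] ℝ),
      (∀ a, fderiv ℝ (f a) (x a) = y a) ↔ (∀ a, x a = g a (y a)))
    (lstar : ∀ a b : A, b ≤ a → (V b →L[ℝ] ℝ))
    (xstar : ∀ a, V a)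
    (hxdef : ∀ a, xstar a
      = g a (∑ b : {b : A // b ≤ a},
          ((∑ c : {c : A // c ≤ b.1}, (lstar b.1 c.1 c.2).comp (F b.1 c.1 c.2))
            - ∑ c : {c : A // b.1 ≤ c}, lstar c.1 b.1 c.2).comp (F a b.1 b.2)))
    (hconsist : ∀ a b : A, ∀ h : b ≤ a, F a b h (xstar a) = xstar b) :
    (∀ a b : A, ∀ h : b ≤ a, F a b h (xstar a) = xstar b) ∧
    (∀ u : ∀ a, V a, (∀ a b : A, ∀ h : b ≤ a, F a b h (u a) = u b) →
      ∑ a, (∑ b : {b : A // a ≤ b}, mu ℝ a b.1) * fderiv ℝ (f a) (xstar a) (u a) = 0) := by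
  refine ⟨hconsist, ?_⟩
  intro u hu
  -- the candidate derivative family
  set y : ∀ a, V a →L[ℝ] ℝ := fun a =>
    ∑ b : {b : A // b ≤ a},
      ((∑ c : {c : A // c ≤ b.1}, (lstar b.1 c.1 c.2).comp (F b.1 c.1 c.2))
        - ∑ c : {c : A // b.1 ≤ c}, lstar c.1 b.1 c.2).comp (F a b.1 b.2) with hy
  have hderiv : ∀ a, fderiv ℝ (f a) (xstar a) = y a := (hg xstar y).mpr hxdef
  -- auxiliary real-valued functions
  set L : A → A → ℝ := fun b c => if h : c ≤ b then lstar b c h (u c) else 0 with hL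
  set D : A → ℝ := fun b => (∑ c, L b c) - (∑ c, L c b) with hD
  set cc : A → ℝ := fun a => ∑ e, if a ≤ e then mu ℝ a e else 0 with hcc
  -- the coefficients
  have hcoef : ∀ a, (∑ b : {b : A // a ≤ b}, mu ℝ a b.1) = cc a := by
    intro a
    rw [sum_subtype_dite' (fun b => a ≤ b) (fun b _ => mu ℝ a b)]
    simp [hcc]
  -- evaluation of y a at u a
  have hyval : ∀ a, y a (u a) = ∑ b, if b ≤ a then D b else 0 := by
    intro a
    rw [hy]
    rw [ContinuousLinearMap.sum_apply]
    rw [sum_subtype_dite' (fun b => b ≤ a)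
      (fun b h => (((∑ c : {c : A // c ≤ b}, (lstar b c.1 c.2).comp (F b c.1 c.2))
        - ∑ c : {c : A // b ≤ c}, lstar c.1 b c.2).comp (F a b h)) (u a))]
    refine Finset.sum_congr rfl fun b _ => ?_
    by_cases h : b ≤ a
    · rw [dif_pos h, if_pos h, hD]
      simp only [ContinuousLinearMap.comp_apply, ContinuousLinearMap.sub_apply,
        ContinuousLinearMap.sum_apply]
      rw [hu a b h]
      simp only [hL]
      congr 1
      · rw [sum_subtype_dite' (fun c => c ≤ b) (fun c h' => lstar b c h' (F b c h' (u b)))]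
        refine Finset.sum_congr rfl fun c _ => ?_
        by_cases h' : c ≤ b
        · rw [dif_pos h', dif_pos h', hu b c h']
        · rw [dif_neg h', dif_neg h']
      · rw [sum_subtype_dite' (fun c => b ≤ c) (fun c h' => lstar c b h' (u b))]
    · rw [dif_neg h, if_neg h]
  -- Möbius inversion: the column sums of the coefficient matrix are 1
  have hmob : ∀ b : A, (∑ a, if b ≤ a then cc a else 0) = 1 := by
    intro b
    have step1 : (∑ a, if b ≤ a then cc a else 0)
        = ∑ a, ∑ e, if b ≤ a ∧ a ≤ e then mu ℝ a e else 0 := by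
      refine Finset.sum_congr rfl fun a _ => ?_
      by_cases h : b ≤ a
      · rw [if_pos h, hcc]
        refine Finset.sum_congr rfl fun e _ => ?_
        simp [h]
      · rw [if_neg h]
        refine (Finset.sum_eq_zero fun e _ => ?_).symm
        simp [h]
    rw [step1, Finset.sum_comm]
    have step2 : ∀ e : A, (∑ a, if b ≤ a ∧ a ≤ e then mu ℝ a e else 0)
        = if b = e then 1 else 0 := by
      intro e
      rw [← Finset.sum_filter]
      rw [show Finset.filter (fun a => b ≤ a ∧ a ≤ e) Finset.univ = Finset.Icc b e by
        ext x; simp [Finset.mem_Icc]]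
      exact sum_Icc_mu_left b e
    simp only [step2]
    simp
  -- telescoping: total sum of D vanishes
  have hDsum : (∑ b, D b) = 0 := by
    rw [hD]
    rw [Finset.sum_sub_distrib]
    rw [Finset.sum_comm (f := fun b c => L b c)]
    exact sub_self _
  -- final computation
  calc ∑ a, (∑ b : {b : A // a ≤ b}, mu ℝ a b.1) * fderiv ℝ (f a) (xstar a) (u a)
      = ∑ a, cc a * (∑ b, if b ≤ a then D b else 0) := by
        refine Finset.sum_congr rfl fun a _ => ?_
        rw [hcoef a, hderiv a, hyval a]
    _ = ∑ a, ∑ b, if b ≤ a then cc a * D b else 0 := by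
        refine Finset.sum_congr rfl fun a _ => ?_
        rw [Finset.mul_sum]
        refine Finset.sum_congr rfl fun b _ => ?_
        rw [mul_ite, mul_zero]
    _ = ∑ b, ∑ a, if b ≤ a then cc a * D b else 0 := Finset.sum_comm
    _ = ∑ b, D b * (∑ a, if b ≤ a then cc a else 0) := by
        refine Finset.sum_congr rfl fun b _ => ?_
        rw [Finset.mul_sum]
        refine Finset.sum_congr rfl fun a _ => ?_
        rw [mul_ite, mul_zero, mul_comm]
    _ = ∑ b, D b := by
        refine Finset.sum_congr rfl fun b _ => ?_
        rw [hmob b, mul_one]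
    _ = 0 := hDsum
end

section
/- (Fixed points of Generalized Belief Propagation are critical points of the region-based free energy) Let I be a finite index set, E_i nonempty finite sets, E_a = ∏_{i∈a} E_i for a ⊆ I, and let A be a finite collection of subsets of I, partially ordered by inclusion, with Möbius function μ of its incidence algebra. Let H_a : E_a → ℝ for each a ∈ A. Suppose the strictly positive messages m = (m_{a→b} : E_b → ℝ_{>0}), one for each pair b ⊆ a in A, are a fixed point of the Generalized Belief Propagation update, i.e., defining for b ⊆ a in A the functions n_{b→a}(y_a) = ∏_{c ∈ A : b ⊆ c, c ⊄ a} m_{c→b}(y_b) (where y_b is the restriction of y_a to b) and the beliefs b_a(y_a) = e^{−H_a(y_a)} · ∏_{b ∈ A : b ⊆ a} n_{b→a}(y_a), the fixed-point equations Σ_{y_a ∈ E_a : y_a|_b = x_b} b_a(y_a) = b_b(x_b) hold for all b ⊆ a in A and all x_b ∈ E_b. Let p_a = b_a / (Σ_{y_a ∈ E_a} b_a(y_a)) be the normalized beliefs. Then (1) the family p = (p_a)_{a∈A} is marginal-consistent: Σ_{y_a : y_a|_b = x_b} p_a(y_a) = p_b(x_b) for all b ⊆ a in A; and (2) p is a critical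 point of the region-based free energy F_GBP(q) = Σ_{a∈A} Σ_{b∈A, b⊆a} μ(a,b)·( Σ_{x_b} q_b(x_b) H_b(x_b) + Σ_{x_b} q_b(x_b) ln q_b(x_b) ) on the constraint set of marginal-consistent families of probability distributions: for every family u = (u_a : E_a → ℝ)_{a∈A} with Σ_{x_a} u_a(x_a) = 0 for all a ∈ A and Σ_{y_a : y_a|_b = x_b} u_a(y_a) = u_b(x_b) for all b ⊆ a in A, one has Σ_{a∈A} Σ_{b∈A, b⊆a} μ(a,b)·Σ_{x_b} ( H_b(x_b) + ln p_b(x_b) + 1 )·u_b(x_b) = 0. -/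
open Finset Real

/-- Restriction `E_a → E_b` of a configuration on `a` to a subset `b ⊆ a`. -/
def res {I : Type*} {E : I → Type*} {a b : Finset I} (h : b ⊆ a)
    (y : ∀ i : a, E i.1) : ∀ i : b, E i.1 :=
  fun i => y ⟨i.1, h i.2⟩

/-- Bottom-up message `n_{b→a}(y_a) = ∏_{c ∈ A : b ⊆ c, c ⊄ a} m_{c→b}(y_a|_b)`. -/
def nmsg {I : Type*} [DecidableEq I] {E : I → Type*}
    (A : Finset (Finset I)) (m : ∀ _a b : Finset I, (∀ i : b, E i.1) → ℝ)
    (b a : Finset I) (h : b ⊆ a) (y : ∀ i : a, E i.1) : ℝ :=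
  ∏ c ∈ A.filter (fun c => b ⊆ c ∧ ¬ c ⊆ a), m c b (res h y)

/-- Belief `b_a(y_a) = e^{−H_a(y_a)} · ∏_{b ∈ A : b ⊆ a} n_{b→a}(y_a)`. -/
noncomputable def belief {I : Type*} [DecidableEq I] {E : I → Type*}
    (A : Finset (Finset I)) (m : ∀ _a b : Finset I, (∀ i : b, E i.1) → ℝ)
    (H : ∀ a : Finset I, (∀ i : a, E i.1) → ℝ)
    (a : Finset I) (y : ∀ i : a, E i.1) : ℝ :=
  Real.exp (-(H a y)) *
    ∏ b ∈ (A.filter (· ⊆ a)).attach, nmsg A m b.1 a (mem_filter.mp b.2).2 y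

lemma nmsg_pos {I : Type*} [DecidableEq I] {E : I → Type*}
    (A : Finset (Finset I)) (m : ∀ _a b : Finset I, (∀ i : b, E i.1) → ℝ)
    (hm : ∀ a ∈ A, ∀ b ∈ A, b ⊆ a → ∀ x : ∀ i : b, E i.1, 0 < m a b x)
    {b a : Finset I} (hb : b ∈ A) (h : b ⊆ a) (y : ∀ i : a, E i.1) :
    0 < nmsg A m b a h y := by
  apply Finset.prod_pos
  intro c hc
  obtain ⟨hcA, hbc, -⟩ := Finset.mem_filter.mp hc
  exact hm c hcA b hb hbc _

lemma belief_pos {I : Type*} [DecidableEq I] {E : I → Type*}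
    (A : Finset (Finset I)) (m : ∀ _a b : Finset I, (∀ i : b, E i.1) → ℝ)
    (H : ∀ a : Finset I, (∀ i : a, E i.1) → ℝ)
    (hm : ∀ a ∈ A, ∀ b ∈ A, b ⊆ a → ∀ x : ∀ i : b, E i.1, 0 < m a b x)
    (a : Finset I) (y : ∀ i : a, E i.1) : 0 < belief A m H a y := by
  apply mul_pos (Real.exp_pos _)
  apply Finset.prod_pos
  intro b _
  exact nmsg_pos A m hm (Finset.mem_filter.mp b.2).1 (Finset.mem_filter.mp b.2).2 y

/-- The dual Möbius identity, via commutation of one-sided matrix inverses. -/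
lemma mobius_dual {I : Type*} [DecidableEq I] (A : Finset (Finset I))
    (μ : Finset I → Finset I → ℝ)
    (hμ : ∀ a ∈ A, ∀ b ∈ A, b ⊆ a →
      ∑ c ∈ A.filter (fun c => b ⊆ c ∧ c ⊆ a), μ c b = if a = b then 1 else 0) :
    ∀ a ∈ A, ∀ b ∈ A,
      ∑ c ∈ A.filter (fun c => b ⊆ c ∧ c ⊆ a), μ a c = if a = b then 1 else 0 := by
  classical
  set Z : Matrix A A ℝ := fun a b => if (b : Finset I) ⊆ a then 1 else 0 with hZ
  set M : Matrix A A ℝ := fun a b => if (b : Finset I) ⊆ a then μ a b else 0 with hM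
  have key : ∀ (a b : A), ∑ c : A, Z a c * M c b
      = ∑ c ∈ A.filter (fun c => (b : Finset I) ⊆ c ∧ c ⊆ a), μ c b := by
    intro a b
    rw [Finset.univ_eq_attach, Finset.sum_filter]
    rw [← Finset.sum_attach A (fun c => if (b : Finset I) ⊆ c ∧ c ⊆ a then μ c b else 0)]
    apply Finset.sum_congr rfl
    intro c _
    simp only [hZ, hM]
    by_cases h1 : (c : Finset I) ⊆ a <;> by_cases h2 : (b : Finset I) ⊆ c <;>
      simp [h1, h2, and_comm]
  have hZM : Z * M = 1 := by
    ext a b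
    rw [Matrix.mul_apply, key a b, Matrix.one_apply]
    by_cases hba : (b : Finset I) ⊆ a
    · rw [hμ a a.2 b b.2 hba]
      exact if_congr Subtype.ext_iff.symm rfl rfl
    · rw [Finset.sum_eq_zero, if_neg]
      · intro h; exact hba (by simp [h])
      · intro c hc
        obtain ⟨-, h1, h2⟩ := Finset.mem_filter.mp hc
        exact absurd (h1.trans h2) hba
  have hMZ : M * Z = 1 := mul_eq_one_comm.mp hZM
  intro a ha b hb
  have := congrFun (congrFun hMZ ⟨a, ha⟩) ⟨b, hb⟩
  rw [Matrix.mul_apply, Matrix.one_apply] at this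
  have key2 : ∑ c : A, M ⟨a, ha⟩ c * Z c ⟨b, hb⟩
      = ∑ c ∈ A.filter (fun c => b ⊆ c ∧ c ⊆ a), μ a c := by
    rw [Finset.univ_eq_attach, Finset.sum_filter]
    rw [← Finset.sum_attach A (fun c => if b ⊆ c ∧ c ⊆ a then μ a c else 0)]
    apply Finset.sum_congr rfl
    intro c _
    simp only [hZ, hM]
    by_cases h1 : (c : Finset I) ⊆ a <;> by_cases h2 : b ⊆ (c : Finset I) <;>
      simp [h1, h2, and_comm]
  rw [key2] at this
  rw [this]
  exact if_congr Subtype.ext_iff rfl rfl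
/-- **Fixed points of Generalized Belief Propagation are critical points of the
region-based free energy.**  `A` is a finite collection of subsets of a finite index set
`I`, ordered by inclusion; `μ` is the Möbius function of its incidence algebra
(characterized by `Σ_{c ∈ A : b ⊆ c ⊆ a} μ(c,b) = δ_{a,b}` for `b ⊆ a` in `A`); the
strictly positive messages `m` are a GBP fixed point, i.e. the beliefs satisfy
`Σ_{y_a : y_a|_b = x_b} b_a(y_a) = b_b(x_b)` for all `b ⊆ a` in `A`; `p_a` is the
normalized belief.  Then (1) the family `p` is marginal-consistent, and (2) `p` is a
critical point of the region-based free energy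
`F_GBP(q) = Σ_{a∈A} Σ_{b∈A, b⊆a} μ(a,b)·(Σ q_b·H_b + Σ q_b·ln q_b)` on the constraint
set of marginal-consistent families of probability distributions. -/
theorem gbp_fixedPoint_is_criticalPoint_of_regionBasedFreeEnergy
    {I : Type*} [Fintype I] [DecidableEq I]
    (E : I → Type*) [∀ i, Fintype (E i)] [∀ i, DecidableEq (E i)] [∀ i, Nonempty (E i)]
    (A : Finset (Finset I))
    (μ : Finset I → Finset I → ℝ)
    (hμ : ∀ a ∈ A, ∀ b ∈ A, b ⊆ a →
      ∑ c ∈ A.filter (fun c => b ⊆ c ∧ c ⊆ a), μ c b = if a = b then 1 else 0)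
    (H : ∀ a : Finset I, (∀ i : a, E i.1) → ℝ)
    (m : ∀ _a b : Finset I, (∀ i : b, E i.1) → ℝ)
    (hm : ∀ a ∈ A, ∀ b ∈ A, b ⊆ a → ∀ x : ∀ i : b, E i.1, 0 < m a b x)
    (hfix : ∀ a ∈ A, ∀ b ∈ A, ∀ h : b ⊆ a, ∀ x : ∀ i : b, E i.1,
      ∑ y ∈ univ.filter (fun y : ∀ i : a, E i.1 => res h y = x), belief A m H a y
        = belief A m H b x)
    (p : ∀ a : Finset I, (∀ i : a, E i.1) → ℝ)
    (hp : ∀ a : Finset I, ∀ y : ∀ i : a, E i.1,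
      p a y = belief A m H a y / ∑ z, belief A m H a z) :
    (∀ a ∈ A, ∀ b ∈ A, ∀ h : b ⊆ a, ∀ x : ∀ i : b, E i.1,
      ∑ y ∈ univ.filter (fun y : ∀ i : a, E i.1 => res h y = x), p a y = p b x)
    ∧
    (∀ u : ∀ a : Finset I, (∀ i : a, E i.1) → ℝ,
      (∀ a ∈ A, ∑ x, u a x = 0) →
      (∀ a ∈ A, ∀ b ∈ A, ∀ h : b ⊆ a, ∀ x : ∀ i : b, E i.1,
        ∑ y ∈ univ.filter (fun y : ∀ i : a, E i.1 => res h y = x), u a y = u b x) →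
      ∑ a ∈ A, ∑ b ∈ A.filter (· ⊆ a), μ a b *
        ∑ x, (H b x + Real.log (p b x) + 1) * u b x = 0) := by
  classical
  have hBpos : ∀ (a : Finset I) (y : ∀ i : a, E i.1), 0 < belief A m H a y :=
    belief_pos A m H hm
  have hZpos : ∀ a : Finset I, 0 < ∑ z, belief A m H a z := fun a =>
    Finset.sum_pos (fun z _ => hBpos a z) Finset.univ_nonempty
  have hZeq : ∀ a ∈ A, ∀ b ∈ A, ∀ h : b ⊆ a,
      (∑ z, belief A m H a z) = ∑ z, belief A m H b z := by
    intro a ha b hb h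
    rw [← Finset.sum_fiberwise univ (fun y => res h y) (belief A m H a)]
    exact Finset.sum_congr rfl fun z _ => hfix a ha b hb h z
  -- Part 1: marginal consistency
  have part1 : ∀ a ∈ A, ∀ b ∈ A, ∀ h : b ⊆ a, ∀ x : ∀ i : b, E i.1,
      ∑ y ∈ univ.filter (fun y : ∀ i : a, E i.1 => res h y = x), p a y = p b x := by
    intro a ha b hb h x
    calc ∑ y ∈ univ.filter (fun y : ∀ i : a, E i.1 => res h y = x), p a y
        = (∑ y ∈ univ.filter (fun y : ∀ i : a, E i.1 => res h y = x),
            belief A m H a y) / ∑ z, belief A m H a z := by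
          rw [Finset.sum_div]; exact Finset.sum_congr rfl fun y _ => hp a y
      _ = belief A m H b x / ∑ z, belief A m H b z := by
          rw [hfix a ha b hb h x, hZeq a ha b hb h]
      _ = p b x := (hp b x).symm
  refine ⟨part1, ?_⟩
  intro u hu0 hu
  set T : Finset I → Finset I → ℝ :=
    fun d c => ∑ z, Real.log (m d c z) * u c z with hT
  set W : Finset I → ℝ := fun c => ∑ d ∈ A.filter (fun d => c ⊆ d), T d c with hW
  set V : Finset I → ℝ := fun c => ∑ d ∈ A.filter (fun d => d ⊆ c), T c d with hV
  -- Step A: per-region value of the directional derivative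
  have stepA : ∀ b ∈ A, ∑ x, (H b x + Real.log (p b x) + 1) * u b x
      = ∑ c ∈ A.filter (· ⊆ b), (W c - V c) := by
    intro b hb
    -- pointwise identity for the gradient term
    have hpt : ∀ x : ∀ i : b, E i.1, H b x + Real.log (p b x) + 1
        = (∑ c ∈ (A.filter (· ⊆ b)).attach,
            ∑ d ∈ A.filter (fun d => c.1 ⊆ d ∧ ¬ d ⊆ b),
              Real.log (m d c.1 (res (mem_filter.mp c.2).2 x)))
          + (1 - Real.log (∑ z, belief A m H b z)) := by
      intro x
      have h1 : Real.log (p b x) = Real.log (belief A m H b x)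
          - Real.log (∑ z, belief A m H b z) := by
        rw [hp b x, Real.log_div (ne_of_gt (hBpos b x)) (ne_of_gt (hZpos b))]
      have h2 : Real.log (belief A m H b x) = -(H b x)
          + ∑ c ∈ (A.filter (· ⊆ b)).attach,
              Real.log (nmsg A m c.1 b (mem_filter.mp c.2).2 x) := by
        unfold belief
        rw [Real.log_mul (Real.exp_ne_zero _), Real.log_exp, Real.log_prod]
        · intro c _
          exact ne_of_gt (nmsg_pos A m hm (Finset.mem_filter.mp c.2).1
            (Finset.mem_filter.mp c.2).2 x)
        · exact ne_of_gt (Finset.prod_pos fun c _ =>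
            nmsg_pos A m hm (Finset.mem_filter.mp c.2).1 (Finset.mem_filter.mp c.2).2 x)
      have h3 : ∀ c ∈ (A.filter (· ⊆ b)).attach,
          Real.log (nmsg A m c.1 b (mem_filter.mp c.2).2 x)
          = ∑ d ∈ A.filter (fun d => c.1 ⊆ d ∧ ¬ d ⊆ b),
              Real.log (m d c.1 (res (mem_filter.mp c.2).2 x)) := by
        intro c _
        unfold nmsg
        rw [Real.log_prod]
        intro d hd
        obtain ⟨hdA, hcd, -⟩ := Finset.mem_filter.mp hd
        exact ne_of_gt (hm d hdA c.1 (Finset.mem_filter.mp c.2).1 hcd _)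
      rw [h1, h2, Finset.sum_congr rfl h3]
      ring
    calc ∑ x, (H b x + Real.log (p b x) + 1) * u b x
        = ∑ x, ((∑ c ∈ (A.filter (· ⊆ b)).attach,
              ∑ d ∈ A.filter (fun d => c.1 ⊆ d ∧ ¬ d ⊆ b),
                Real.log (m d c.1 (res (mem_filter.mp c.2).2 x))) * u b x
            + (1 - Real.log (∑ z, belief A m H b z)) * u b x) := by
          refine Finset.sum_congr rfl fun x _ => ?_
          rw [hpt x, add_mul]
      _ = ∑ x, (∑ c ∈ (A.filter (· ⊆ b)).attach,
              ∑ d ∈ A.filter (fun d => c.1 ⊆ d ∧ ¬ d ⊆ b),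
                Real.log (m d c.1 (res (mem_filter.mp c.2).2 x))) * u b x := by
          rw [Finset.sum_add_distrib, ← Finset.mul_sum, hu0 b hb, mul_zero, add_zero]
      _ = ∑ c ∈ (A.filter (· ⊆ b)).attach,
            ∑ d ∈ A.filter (fun d => c.1 ⊆ d ∧ ¬ d ⊆ b),
              ∑ x, Real.log (m d c.1 (res (mem_filter.mp c.2).2 x)) * u b x := by
          simp only [Finset.sum_mul]
          rw [Finset.sum_comm]
          exact Finset.sum_congr rfl fun c _ => Finset.sum_comm
      _ = ∑ c ∈ (A.filter (· ⊆ b)).attach,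
            ∑ d ∈ A.filter (fun d => c.1 ⊆ d ∧ ¬ d ⊆ b), T d c.1 := by
          refine Finset.sum_congr rfl fun c _ => Finset.sum_congr rfl fun d _ => ?_
          have hc : c.1 ⊆ b := (mem_filter.mp c.2).2
          have hcA : c.1 ∈ A := (mem_filter.mp c.2).1
          rw [hT]
          rw [← Finset.sum_fiberwise univ (fun y : ∀ i : b, E i.1 => res hc y)
            (fun y => Real.log (m d c.1 (res hc y)) * u b y)]
          refine Finset.sum_congr rfl fun z _ => ?_
          rw [← hu b hb c.1 hcA hc z, Finset.mul_sum]
          refine Finset.sum_congr rfl fun y hy => ?_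
          rw [(Finset.mem_filter.mp hy).2]
      _ = ∑ c ∈ A.filter (· ⊆ b),
            ∑ d ∈ A.filter (fun d => c ⊆ d ∧ ¬ d ⊆ b), T d c :=
          by rw [Finset.sum_attach (A.filter (· ⊆ b)) (fun c => ∑ d ∈ A.filter (fun d => c ⊆ d ∧ ¬ d ⊆ b), T d c)]
      _ = ∑ c ∈ A.filter (· ⊆ b),
            (W c - ∑ d ∈ A.filter (fun d => c ⊆ d ∧ d ⊆ b), T d c) := by
          refine Finset.sum_congr rfl fun c _ => ?_
          have hsplit := Finset.sum_filter_add_sum_filter_not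
            (A.filter (fun d => c ⊆ d)) (fun d => d ⊆ b) (fun d => T d c)
          rw [Finset.filter_filter, Finset.filter_filter] at hsplit
          rw [hW]
          simp only at hsplit ⊢
          linarith [hsplit]
      _ = ∑ c ∈ A.filter (· ⊆ b), (W c - V c) := by
          rw [Finset.sum_sub_distrib, Finset.sum_sub_distrib]
          congr 1
          -- swap the double sum
          calc ∑ c ∈ A.filter (· ⊆ b), ∑ d ∈ A.filter (fun d => c ⊆ d ∧ d ⊆ b), T d c
              = ∑ c ∈ A, ∑ d ∈ A, if c ⊆ d ∧ d ⊆ b then T d c else 0 := by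
                simp only [Finset.sum_filter]
                refine Finset.sum_congr rfl fun c _ => ?_
                split_ifs with h
                · rfl
                · exact (Finset.sum_eq_zero fun d _ => by
                    rw [if_neg (fun hh => h (hh.1.trans hh.2))]).symm
            _ = ∑ d ∈ A, ∑ c ∈ A, if c ⊆ d ∧ d ⊆ b then T d c else 0 :=
                Finset.sum_comm
            _ = ∑ c ∈ A.filter (· ⊆ b), V c := by
                simp only [hV, Finset.sum_filter]
                refine Finset.sum_congr rfl fun d _ => ?_
                split_ifs with h
                · refine Finset.sum_congr rfl fun c _ => ?_
                  simp [h]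
                · exact Finset.sum_eq_zero fun c _ => by
                    rw [if_neg (fun hh => h hh.2)]
  -- Step B: conclude using the dual Möbius identity
  have hdual := mobius_dual A μ hμ
  calc ∑ a ∈ A, ∑ b ∈ A.filter (· ⊆ a), μ a b *
        ∑ x, (H b x + Real.log (p b x) + 1) * u b x
      = ∑ a ∈ A, ∑ b ∈ A.filter (· ⊆ a), μ a b * ∑ c ∈ A.filter (· ⊆ b), (W c - V c) := by
        refine Finset.sum_congr rfl fun a _ => Finset.sum_congr rfl fun b hbf => ?_
        rw [stepA b (Finset.mem_filter.mp hbf).1]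
    _ = ∑ a ∈ A, ∑ b ∈ A, ∑ c ∈ A,
          if c ⊆ b ∧ b ⊆ a then μ a b * (W c - V c) else 0 := by
        refine Finset.sum_congr rfl fun a _ => ?_
        simp only [Finset.mul_sum, Finset.sum_filter]
        refine Finset.sum_congr rfl fun b _ => ?_
        split_ifs with h
        · refine Finset.sum_congr rfl fun c _ => ?_
          simp [h]
        · exact (Finset.sum_eq_zero fun c _ => by
            rw [if_neg (fun hh => h hh.2)]).symm
    _ = ∑ c ∈ A, ∑ a ∈ A, ∑ b ∈ A,
          if c ⊆ b ∧ b ⊆ a then μ a b * (W c - V c) else 0 := by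
        have h1 : (∑ a ∈ A, ∑ b ∈ A, ∑ c ∈ A,
              if c ⊆ b ∧ b ⊆ a then μ a b * (W c - V c) else 0)
            = ∑ a ∈ A, ∑ c ∈ A, ∑ b ∈ A,
              if c ⊆ b ∧ b ⊆ a then μ a b * (W c - V c) else 0 :=
          Finset.sum_congr rfl fun a _ => Finset.sum_comm
        rw [h1]
        exact Finset.sum_comm
    _ = ∑ c ∈ A, ∑ a ∈ A,
          (∑ b ∈ A.filter (fun b => c ⊆ b ∧ b ⊆ a), μ a b) * (W c - V c) := by
        refine Finset.sum_congr rfl fun c _ => Finset.sum_congr rfl fun a _ => ?_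
        rw [Finset.sum_filter, Finset.sum_mul]
        refine Finset.sum_congr rfl fun b _ => ?_
        split_ifs <;> simp
    _ = ∑ c ∈ A, ∑ a ∈ A, (if a = c then (1:ℝ) else 0) * (W c - V c) := by
        refine Finset.sum_congr rfl fun c hc => Finset.sum_congr rfl fun a ha => ?_
        rw [hdual a ha c hc]
    _ = ∑ c ∈ A, (W c - V c) := by
        refine Finset.sum_congr rfl fun c hc => ?_
        simp only [ite_mul, one_mul, zero_mul]
        rw [Finset.sum_ite_eq' A c (fun _ => W c - V c), if_pos hc]
    _ = 0 := by
        rw [Finset.sum_sub_distrib, sub_eq_zero]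
        calc ∑ c ∈ A, W c
            = ∑ c ∈ A, ∑ d ∈ A, if c ⊆ d then T d c else 0 := by
              simp only [hW, Finset.sum_filter]
          _ = ∑ d ∈ A, ∑ c ∈ A, if c ⊆ d then T d c else 0 := Finset.sum_comm
          _ = ∑ c ∈ A, V c := by
              simp only [hV, Finset.sum_filter]
end
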